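/- Let (B,X,⊲,⊲',*) be a shadow biquandle such that X is strongly connected, let [x,y,z] = y*((x↘z) ⊲' (x↘y)) be the corresponding horizontal-tribracket, and let A be an abelian group. Then for every integer n, the n-th shadow biquandle homology group H_n^SB(B,X;A) is isomorphic to the n-th local biquandle homology group H_n^LB(X;A), and the n-th shadow biquandle cohomology group H^n_SB(B,X;A) is isomorphic to the n-th local biquandle cohomology group H^n_LB(X;A); these isomorphisms are induced by the chain map determined on generators by μ_n(x,a₁,…,a_n) = (x, x*a₁,…,x*a_n). -/

import Mathlib

/-- A biquandle: a set `B` with two binary operations `ut` (the under operation `⊲`)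
and `ot` (the over operation `⊲'`) satisfying the biquandle axioms. -/
structure Biquandle (B : Type*) where
  ut : B → B → B
  ot : B → B → B
  diag : ∀ a, ut a a = ot a a
  ut_bij : ∀ b, Function.Bijective fun a => ut a b
  ot_bij : ∀ b, Function.Bijective fun a => ot a b
  S_bij : Function.Bijective fun p : B × B => (ot p.2 p.1, ut p.1 p.2)
  ex1 : ∀ a b c, ut (ut a b) (ut c b) = ut (ut a c) (ot b c)
  ex2 : ∀ a b c, ot (ut a b) (ut c b) = ut (ot a c) (ot b c)
  ex3 : ∀ a b c, ot (ot a b) (ot c b) = ot (ot a c) (ut b c)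

/-- The inverse `a ⊲⁻¹ b` of the bijection `·⊲b` of a biquandle. -/
noncomputable def Biquandle.utInv {B : Type*} (bq : Biquandle B) (a b : B) : B :=
  (Equiv.ofBijective _ (bq.ut_bij b)).symm a

/-- The inverse `a ⊲'⁻¹ b` of the bijection `·⊲'b` of a biquandle. -/
noncomputable def Biquandle.otInv {B : Type*} (bq : Biquandle B) (a b : B) : B :=
  (Equiv.ofBijective _ (bq.ot_bij b)).symm a

/-- A `B`-set for a biquandle `bq` on `B`: a set `X` with an action `act = *`
such that each `·*a` is a bijection of `X` and `(x*a)*(b⊲'a) = (x*b)*(a⊲b)`. -/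
structure BSet {B : Type*} (bq : Biquandle B) (X : Type*) where
  act : X → B → X
  act_bij : ∀ a, Function.Bijective fun x => act x a
  compat : ∀ x a b, act (act x a) (bq.ot b a) = act (act x b) (bq.ut a b)

/-- The inverse `x *⁻¹ a` of the bijection `·*a` of a `B`-set. -/
noncomputable def BSet.actInv {B : Type*} {bq : Biquandle B} {X : Type*}
    (bs : BSet bq X) (x : X) (a : B) : X :=
  (Equiv.ofBijective _ (bs.act_bij a)).symm x

/-- A `B`-set is strongly connected if for each `x` the map `a ↦ x*a` is a bijection `B → X`. -/
def BSet.StronglyConnected {B : Type*} {bq : Biquandle B} {X : Type*} (bs : BSet bq X) : Prop :=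
  ∀ x, Function.Bijective fun a => bs.act x a

/-- For a strongly connected `B`-set, `x ↘ y` is the unique `a ∈ B` with `x*a = y`. -/
noncomputable def BSet.sd {B : Type*} {bq : Biquandle B} {X : Type*} (bs : BSet bq X)
    (h : bs.StronglyConnected) (x y : X) : B :=
  (Equiv.ofBijective _ (h x)).symm y

/-- The corresponding horizontal-tribracket of a shadow biquandle with strongly connected
`B`-set: `[x,y,z] = y*((x↘z) ⊲' (x↘y))`. -/
noncomputable def BSet.tribr {B X : Type*} {bq : Biquandle B} (bs : BSet bq X)
    (h : bs.StronglyConnected) (x y z : X) : X :=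
  bs.act y (bq.ot (bs.sd h x z) (bs.sd h x y))

open scoped TensorProduct

/-! ### Chain groups

For `n : ℤ`, the generating set of the `n`-th shadow biquandle chain group: it is
`X × Bⁿ` for `n ≥ 1` and empty for `n < 1` (so the chain group is `0` for `n < 1`). -/

/-- Generators of the shadow biquandle chain complex in degree `n`. -/
def GSB (B X : Type) (n : ℤ) : Type := X × (Fin n.toNat → B) × PLift (1 ≤ n)

/-- Generators of the local biquandle chain complex in degree `n`
(pairs `((x,y₁),…,(x,y_n))` are encoded as `(x, (y₁,…,y_n))`). -/
def GLB (X : Type) (n : ℤ) : Type := X × (Fin n.toNat → X) × PLift (1 ≤ n)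

/-- Deletion of the `i`-th entry of a tuple. -/
def delZ {α : Type} {n m : ℤ} (hm : m = n - 1) (i : Fin n.toNat) (f : Fin n.toNat → α) :
    Fin m.toNat → α :=
  fun j =>
    if h : (j : ℕ) < (i : ℕ) then f ⟨j, by have := i.isLt; omega⟩
    else f ⟨(j : ℕ) + 1, by have := j.isLt; have := i.isLt; omega⟩

/-- The twisted tuple `(a₁⊲a_i,…,a_{i-1}⊲a_i, a_{i+1}⊲'a_i,…,a_n⊲'a_i)` of the shadow
biquandle boundary. -/
def sbTwistZ {B : Type} (bq : Biquandle B) {n m : ℤ} (hm : m = n - 1)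
    (i : Fin n.toNat) (f : Fin n.toNat → B) : Fin m.toNat → B :=
  fun j =>
    if h : (j : ℕ) < (i : ℕ) then bq.ut (f ⟨j, by have := i.isLt; omega⟩) (f i)
    else bq.ot (f ⟨(j : ℕ) + 1, by have := j.isLt; have := i.isLt; omega⟩) (f i)

/-- The twisted tuple `([x,y₁,y_i],…,[x,y_{i-1},y_i],[x,y_i,y_{i+1}],…,[x,y_i,y_n])` of
the local biquandle boundary. -/
def lbTwistZ {X : Type} (tb : X → X → X → X) {n m : ℤ} (hm : m = n - 1)
    (x : X) (i : Fin n.toNat) (f : Fin n.toNat → X) : Fin m.toNat → X :=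
  fun j =>
    if h : (j : ℕ) < (i : ℕ) then tb x (f ⟨j, by have := i.isLt; omega⟩) (f i)
    else tb x (f i) (f ⟨(j : ℕ) + 1, by have := j.isLt; have := i.isLt; omega⟩)

/-- The shadow biquandle boundary `∂_n^sb : C_n^sb → C_{n-1}^sb` (zero unless `n ≥ 2`). -/
noncomputable def dSB {B X : Type} (bq : Biquandle B) (bs : BSet bq X) (n m : ℤ)
    (hm : m = n - 1) :
    FreeAbelianGroup (GSB B X n) →+ FreeAbelianGroup (GSB B X m) :=
  FreeAbelianGroup.lift fun g =>
    if h2 : 2 ≤ n then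
      ∑ i : Fin n.toNat, ((-1 : ℤ) ^ ((i : ℕ) + 1)) •
        (FreeAbelianGroup.of (⟨g.1, delZ hm i g.2.1, ⟨by omega⟩⟩ : GSB B X m)
          - FreeAbelianGroup.of
              (⟨bs.act g.1 (g.2.1 i), sbTwistZ bq hm i g.2.1, ⟨by omega⟩⟩ : GSB B X m))
    else 0

/-- The local biquandle boundary `∂_n^lb : C_n^lb → C_{n-1}^lb` (zero unless `n ≥ 2`),
for a ternary operation `tb`. -/
noncomputable def dLB {X : Type} (tb : X → X → X → X) (n m : ℤ) (hm : m = n - 1) :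
    FreeAbelianGroup (GLB X n) →+ FreeAbelianGroup (GLB X m) :=
  FreeAbelianGroup.lift fun g =>
    if h2 : 2 ≤ n then
      ∑ i : Fin n.toNat, ((-1 : ℤ) ^ ((i : ℕ) + 1)) •
        (FreeAbelianGroup.of (⟨g.1, delZ hm i g.2.1, ⟨by omega⟩⟩ : GLB X m)
          - FreeAbelianGroup.of
              (⟨g.2.1 i, lbTwistZ tb hm g.1 i g.2.1, ⟨by omega⟩⟩ : GLB X m))
    else 0

/-- The degenerate subgroup `D_n^sb`, generated by the generators with two equal
adjacent entries. -/
def DegSB (B X : Type) (n : ℤ) : Submodule ℤ (FreeAbelianGroup (GSB B X n)) :=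
  Submodule.span ℤ {c | ∃ g : GSB B X n, c = FreeAbelianGroup.of g ∧
    ∃ i j : Fin n.toNat, (i : ℕ) + 1 = (j : ℕ) ∧ g.2.1 i = g.2.1 j}

/-- The degenerate subgroup `D_n^lb`. -/
def DegLB (X : Type) (n : ℤ) : Submodule ℤ (FreeAbelianGroup (GLB X n)) :=
  Submodule.span ℤ {c | ∃ g : GLB X n, c = FreeAbelianGroup.of g ∧
    ∃ i j : Fin n.toNat, (i : ℕ) + 1 = (j : ℕ) ∧ g.2.1 i = g.2.1 j}

/-! ### Homology with coefficients

The chain complex with coefficients in `A` is `(C_*^sb/D_*^sb) ⊗ A`; by right exactness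
of the tensor product this quotient complex is presented as `(C_*^sb ⊗ A)` modulo the
image of `D_*^sb ⊗ A`, and its homology in degree `n` is
`{c | ∂c ∈ D_{n-1}⊗A} / (D_n⊗A + im ∂_{n+1})`. -/

/-- Shadow biquandle chains with coefficients in `A`. -/
abbrev CSBA (B X A : Type) [AddCommGroup A] (n : ℤ) : Type :=
  (FreeAbelianGroup (GSB B X n)) ⊗[ℤ] A

/-- Local biquandle chains with coefficients in `A`. -/
abbrev CLBA (X A : Type) [AddCommGroup A] (n : ℤ) : Type :=
  (FreeAbelianGroup (GLB X n)) ⊗[ℤ] A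

/-- The shadow biquandle boundary with coefficients, `∂ ⊗ id`. -/
noncomputable def dSBA {B X : Type} (bq : Biquandle B) (bs : BSet bq X)
    (A : Type) [AddCommGroup A] (n m : ℤ) (hm : m = n - 1) :
    CSBA B X A n →ₗ[ℤ] CSBA B X A m :=
  TensorProduct.map (dSB bq bs n m hm).toIntLinearMap LinearMap.id

/-- The local biquandle boundary with coefficients, `∂ ⊗ id`. -/
noncomputable def dLBA {X : Type} (tb : X → X → X → X)
    (A : Type) [AddCommGroup A] (n m : ℤ) (hm : m = n - 1) :
    CLBA X A n →ₗ[ℤ] CLBA X A m :=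
  TensorProduct.map (dLB tb n m hm).toIntLinearMap LinearMap.id

/-- The image of `D_n^sb ⊗ A` in `C_n^sb ⊗ A`. -/
def DegSBA (B X A : Type) [AddCommGroup A] (n : ℤ) : Submodule ℤ (CSBA B X A n) :=
  Submodule.span ℤ {c | ∃ d ∈ DegSB B X n, ∃ a : A, c = d ⊗ₜ[ℤ] a}

/-- The image of `D_n^lb ⊗ A` in `C_n^lb ⊗ A`. -/
def DegLBA (X A : Type) [AddCommGroup A] (n : ℤ) : Submodule ℤ (CLBA X A n) :=
  Submodule.span ℤ {c | ∃ d ∈ DegLB X n, ∃ a : A, c = d ⊗ₜ[ℤ] a}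

/-- Cycles of the quotient complex `C_*^SB ⊗ A`: chains whose boundary is degenerate. -/
noncomputable def cycSB {B X : Type} (bq : Biquandle B) (bs : BSet bq X)
    (A : Type) [AddCommGroup A] (n : ℤ) : Submodule ℤ (CSBA B X A n) :=
  (DegSBA B X A (n - 1)).comap (dSBA bq bs A n (n - 1) rfl)

/-- Boundaries of the quotient complex `C_*^SB ⊗ A` together with degenerate chains. -/
noncomputable def bdrSB {B X : Type} (bq : Biquandle B) (bs : BSet bq X)
    (A : Type) [AddCommGroup A] (n : ℤ) : Submodule ℤ (CSBA B X A n) :=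
  DegSBA B X A n ⊔ LinearMap.range (dSBA bq bs A (n + 1) n (by ring))

/-- The `n`-th shadow biquandle homology group `H_n^SB(B,X;A)` of the quotient complex
`(C_*^sb/D_*^sb) ⊗ A`. -/
noncomputable abbrev HSB {B X : Type} (bq : Biquandle B) (bs : BSet bq X)
    (A : Type) [AddCommGroup A] (n : ℤ) :=
  cycSB bq bs A n ⧸ ((bdrSB bq bs A n).comap (cycSB bq bs A n).subtype)

/-- Cycles of the quotient complex `C_*^LB ⊗ A`. -/
noncomputable def cycLB {X : Type} (tb : X → X → X → X)
    (A : Type) [AddCommGroup A] (n : ℤ) : Submodule ℤ (CLBA X A n) :=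
  (DegLBA X A (n - 1)).comap (dLBA tb A n (n - 1) rfl)

/-- Boundaries of the quotient complex `C_*^LB ⊗ A` together with degenerate chains. -/
noncomputable def bdrLB {X : Type} (tb : X → X → X → X)
    (A : Type) [AddCommGroup A] (n : ℤ) : Submodule ℤ (CLBA X A n) :=
  DegLBA X A n ⊔ LinearMap.range (dLBA tb A (n + 1) n (by ring))

/-- The `n`-th local biquandle homology group `H_n^LB(X;A)`. -/
noncomputable abbrev HLB {X : Type} (tb : X → X → X → X)
    (A : Type) [AddCommGroup A] (n : ℤ) :=
  cycLB tb A n ⧸ ((bdrLB tb A n).comap (cycLB tb A n).subtype)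

/-! ### The chain map `μ` -/

/-- The chain map `μ_n` induced by `μ_n(x,a₁,…,a_n) = (x, x*a₁, …, x*a_n)`. -/
noncomputable def muZ {B X : Type} (bq : Biquandle B) (bs : BSet bq X) (n : ℤ) :
    FreeAbelianGroup (GSB B X n) →+ FreeAbelianGroup (GLB X n) :=
  FreeAbelianGroup.lift fun g =>
    FreeAbelianGroup.of (⟨g.1, fun i => bs.act g.1 (g.2.1 i), g.2.2⟩ : GLB X n)

/-- The chain map `μ_n ⊗ id` with coefficients. -/
noncomputable def muA {B X : Type} (bq : Biquandle B) (bs : BSet bq X)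
    (A : Type) [AddCommGroup A] (n : ℤ) : CSBA B X A n →ₗ[ℤ] CLBA X A n :=
  TensorProduct.map (muZ bq bs n).toIntLinearMap LinearMap.id

/-! ### Cohomology

Cochains of the quotient complex `C_*^SB = C_*^sb/D_*^sb` with values in `A` are
homomorphisms `C_n^sb →+ A` vanishing on `D_n^sb`. -/

/-- Precomposition with a fixed homomorphism, as a homomorphism. -/
def precompHom {M N A : Type} [AddCommGroup M] [AddCommGroup N] [AddCommGroup A]
    (φ : M →+ N) : (N →+ A) →+ (M →+ A) where
  toFun f := f.comp φ
  map_zero' := rfl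
  map_add' f g := rfl

/-- Cochains on `C_n^SB`: homomorphisms vanishing on the degenerate subgroup. -/
def vanSB (B X A : Type) [AddCommGroup A] (n : ℤ) :
    AddSubgroup ((FreeAbelianGroup (GSB B X n)) →+ A) where
  carrier := {f | ∀ d ∈ DegSB B X n, f d = 0}
  zero_mem' := fun d _ => rfl
  add_mem' := by
    intro f g hf hg d hd
    simp [AddMonoidHom.add_apply, hf d hd, hg d hd]
  neg_mem' := by
    intro f hf d hd
    simp [AddMonoidHom.neg_apply, hf d hd]

/-- Cochains on `C_n^LB`. -/
def vanLB (X A : Type) [AddCommGroup A] (n : ℤ) :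
    AddSubgroup ((FreeAbelianGroup (GLB X n)) →+ A) where
  carrier := {f | ∀ d ∈ DegLB X n, f d = 0}
  zero_mem' := fun d _ => rfl
  add_mem' := by
    intro f g hf hg d hd
    simp [AddMonoidHom.add_apply, hf d hd, hg d hd]
  neg_mem' := by
    intro f hf d hd
    simp [AddMonoidHom.neg_apply, hf d hd]

/-- Shadow biquandle `n`-cocycles: cochains on `C_n^SB` killed by the coboundary
`δf = f ∘ ∂_{n+1}`. -/
noncomputable def cocySB {B X : Type} (bq : Biquandle B) (bs : BSet bq X)
    (A : Type) [AddCommGroup A] (n : ℤ) :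
    AddSubgroup ((FreeAbelianGroup (GSB B X n)) →+ A) :=
  vanSB B X A n ⊓ (precompHom (A := A) (dSB bq bs (n + 1) n (by ring))).ker

/-- Shadow biquandle `n`-coboundaries: cochains of the form `g ∘ ∂_n` for a cochain `g`
on `C_{n-1}^SB`. -/
noncomputable def cobSB {B X : Type} (bq : Biquandle B) (bs : BSet bq X)
    (A : Type) [AddCommGroup A] (n : ℤ) :
    AddSubgroup ((FreeAbelianGroup (GSB B X n)) →+ A) :=
  AddSubgroup.map (precompHom (A := A) (dSB bq bs n (n - 1) rfl)) (vanSB B X A (n - 1))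

/-- The `n`-th shadow biquandle cohomology group `H^n_SB(B,X;A)`. -/
noncomputable abbrev HcSB {B X : Type} (bq : Biquandle B) (bs : BSet bq X)
    (A : Type) [AddCommGroup A] (n : ℤ) :=
  cocySB bq bs A n ⧸ (cobSB bq bs A n).addSubgroupOf (cocySB bq bs A n)

/-- Local biquandle `n`-cocycles. -/
noncomputable def cocyLB {X : Type} (tb : X → X → X → X)
    (A : Type) [AddCommGroup A] (n : ℤ) :
    AddSubgroup ((FreeAbelianGroup (GLB X n)) →+ A) :=
  vanLB X A n ⊓ (precompHom (A := A) (dLB tb (n + 1) n (by ring))).ker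

/-- Local biquandle `n`-coboundaries. -/
noncomputable def cobLB {X : Type} (tb : X → X → X → X)
    (A : Type) [AddCommGroup A] (n : ℤ) :
    AddSubgroup ((FreeAbelianGroup (GLB X n)) →+ A) :=
  AddSubgroup.map (precompHom (A := A) (dLB tb n (n - 1) rfl)) (vanLB X A (n - 1))

/-- The `n`-th local biquandle cohomology group `H^n_LB(X;A)`. -/
noncomputable abbrev HcLB {X : Type} (tb : X → X → X → X)
    (A : Type) [AddCommGroup A] (n : ℤ) :=
  cocyLB tb A n ⧸ (cobLB tb A n).addSubgroupOf (cocyLB tb A n)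

/-! Strong connectivity makes `(x, a₁, …, aₙ) ↦ (x, x*a₁, …, x*aₙ)` a bijection between the
generators of the two chain complexes, and it visibly preserves degeneracy. With
`y = x*a`, `z = x*b` the tribracket is `[x, y, z] = (x*a)*(b ⊲' a)`, which the `B`-set axiom
rewrites as `(x*b)*(a ⊲ b)`; these are exactly the twisted entries of the shadow biquandle
boundary, so `μ` commutes with the boundaries. Hence `μ` is an isomorphism of chain complexes
carrying the degenerate subcomplex onto the degenerate subcomplex, and so induces
isomorphisms on the homology of `C ⊗ A` and on the cohomology of `Hom(C, A)`. -/

section Subquotient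

variable {R M N : Type*} [Ring R] [AddCommGroup M] [AddCommGroup N] [Module R M] [Module R N]

noncomputable def LinearEquiv.subquotientCongr (e : M ≃ₗ[R] N) {p q : Submodule R M}
    {p' q' : Submodule R N} (hp : p.map (e : M →ₗ[R] N) = p')
    (hq : q.map (e : M →ₗ[R] N) = q') :
    (p ⧸ q.comap p.subtype) ≃ₗ[R] (p' ⧸ q'.comap p'.subtype) :=
  Submodule.Quotient.equiv _ _ ((e.submoduleMap p).trans (LinearEquiv.ofEq _ _ hp)) <| by
    rw [Submodule.map_equiv_eq_comap_symm]
    ext x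
    simp [← hq, Submodule.mem_map_equiv]

theorem LinearEquiv.subquotientCongr_mk (e : M ≃ₗ[R] N) {p q : Submodule R M}
    {p' q' : Submodule R N} (hp : p.map (e : M →ₗ[R] N) = p')
    (hq : q.map (e : M →ₗ[R] N) = q') {c : p} {c' : p'} (hc : (c' : N) = e c) :
    e.subquotientCongr hp hq (Submodule.Quotient.mk c) = Submodule.Quotient.mk c' :=
  congrArg Submodule.Quotient.mk (Subtype.ext hc.symm)

end Subquotient

section AddSubquotient

variable {G H : Type*} [AddCommGroup G] [AddCommGroup H]

def AddEquiv.subquotientCongr (e : G ≃+ H) {K L : AddSubgroup G} {K' L' : AddSubgroup H}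
    (hK : K.map e.toAddMonoidHom = K') (hL : L.map e.toAddMonoidHom = L') :
    K ⧸ L.addSubgroupOf K ≃+ K' ⧸ L'.addSubgroupOf K' :=
  QuotientAddGroup.congr _ _ ((e.addSubgroupMap K).trans (AddEquiv.addSubgroupCongr hK)) <| by
    rw [AddSubgroup.map_equiv_eq_comap_symm]
    ext x
    rw [AddSubgroup.mem_comap, AddSubgroup.mem_addSubgroupOf, AddSubgroup.mem_addSubgroupOf,
      ← hL]
    exact AddSubgroup.mem_map_equiv.symm

theorem AddEquiv.subquotientCongr_mk (e : G ≃+ H) {K L : AddSubgroup G} {K' L' : AddSubgroup H}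
    (hK : K.map e.toAddMonoidHom = K') (hL : L.map e.toAddMonoidHom = L') {c : K} {c' : K'}
    (hc : (c' : H) = e c) :
    e.subquotientCongr hK hL (QuotientAddGroup.mk c) = QuotientAddGroup.mk c' :=
  congrArg QuotientAddGroup.mk (Subtype.ext hc.symm)

end AddSubquotient

section CommSquare

variable {R M N M' N' : Type*} [Semiring R] [AddCommMonoid M] [AddCommMonoid N]
  [AddCommMonoid M'] [AddCommMonoid N'] [Module R M] [Module R N] [Module R M'] [Module R N']
  {e : M ≃ₗ[R] N} {e' : M' ≃ₗ[R] N'} {d : M →ₗ[R] M'} {d' : N →ₗ[R] N'}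

theorem Submodule.map_comap_eq_of_comm (comm : d' ∘ₗ e = e' ∘ₗ d) (p : Submodule R M') :
    (p.comap d).map (e : M →ₗ[R] N) = (p.map (e' : M' →ₗ[R] N')).comap d' := by
  ext y
  have hy : e'.symm (d' y) = d (e.symm y) := by
    rw [e'.symm_apply_eq]
    simpa using LinearMap.congr_fun comm (e.symm y)
  rw [Submodule.mem_map_equiv, Submodule.mem_comap, Submodule.mem_comap, Submodule.mem_map_equiv,
    hy]

theorem LinearMap.map_range_eq_of_comm (comm : d' ∘ₗ e = e' ∘ₗ d) :
    (LinearMap.range d).map (e' : M' →ₗ[R] N') = LinearMap.range d' := by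
  rw [← LinearMap.range_comp, ← comm, LinearMap.range_comp_of_range_eq_top _ e.range]

end CommSquare

theorem TensorProduct.map_span_tmul {R M N : Type*} [CommSemiring R] [AddCommMonoid M]
    [AddCommMonoid N] [Module R M] [Module R N] (f : M →ₗ[R] N) (p : Submodule R M) (P : Type*)
    [AddCommMonoid P] [Module R P] :
    (Submodule.span R {c | ∃ m ∈ p, ∃ a : P, c = m ⊗ₜ[R] a}).map
        (TensorProduct.map f LinearMap.id) =
      Submodule.span R {c | ∃ n ∈ p.map f, ∃ a : P, c = n ⊗ₜ[R] a} := by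
  rw [Submodule.map_span]
  congr 1
  ext c
  simp [eq_comm]

theorem AddSubgroup.map_ker_eq_of_comm {G H G' H' : Type*} [AddGroup G] [AddGroup H]
    [AddGroup G'] [AddGroup H'] {Φ : G ≃+ H} {Ψ : G' ≃+ H'} {ψ : G →+ G'} {ψ' : H →+ H'}
    (comm : ψ'.comp Φ.toAddMonoidHom = Ψ.toAddMonoidHom.comp ψ) :
    ψ.ker.map Φ.toAddMonoidHom = ψ'.ker := by
  ext y
  have hy : ψ' y = Ψ (ψ (Φ.symm y)) := by
    simpa using DFunLike.congr_fun comm (Φ.symm y)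
  rw [AddSubgroup.mem_map_equiv, AddMonoidHom.mem_ker, AddMonoidHom.mem_ker, hy,
    map_eq_zero_iff Ψ Ψ.injective]

section Precomposition

variable {M N M' N' A : Type} [AddCommGroup M] [AddCommGroup N] [AddCommGroup M']
  [AddCommGroup N'] [AddCommGroup A]
  {e : M ≃+ N} {e' : M' ≃+ N'} {d : M →+ M'} {d' : N →+ N'}

theorem precompHom_comp_addMonoidHomCongrLeft
    (comm : d'.comp e.toAddMonoidHom = e'.toAddMonoidHom.comp d) :
    (precompHom d').comp (e'.addMonoidHomCongrLeft (N := A)).toAddMonoidHom =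
      (e.addMonoidHomCongrLeft (N := A)).toAddMonoidHom.comp (precompHom d) := by
  ext f x
  simp only [precompHom, AddEquiv.toAddMonoidHom_eq_coe, AddMonoidHom.coe_comp,
    AddMonoidHom.coe_mk, ZeroHom.coe_mk, AddMonoidHom.coe_coe, Function.comp_apply,
    AddEquiv.addMonoidHomCongrLeft_apply]
  congr 1
  rw [AddEquiv.symm_apply_eq]
  simpa using DFunLike.congr_fun comm (e.symm x)

end Precomposition

namespace BSet

variable {B X : Type*} {bq : Biquandle B} (bs : BSet bq X) (h : bs.StronglyConnected)

theorem act_sd (x y : X) : bs.act x (bs.sd h x y) = y :=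
  (Equiv.ofBijective _ (h x)).apply_symm_apply y

theorem sd_act (x : X) (a : B) : bs.sd h x (bs.act x a) = a :=
  (Equiv.ofBijective _ (h x)).symm_apply_apply a

theorem tribr_act_act (x : X) (a b : B) :
    bs.tribr h x (bs.act x a) (bs.act x b) = bs.act (bs.act x a) (bq.ot b a) := by
  rw [tribr, sd_act, sd_act]

end BSet

theorem delZ_comp {α β : Type} (g : α → β) {n m : ℤ} (hm : m = n - 1) (i : Fin n.toNat)
    (f : Fin n.toNat → α) : delZ hm i (g ∘ f) = g ∘ delZ hm i f := by
  funext j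
  simp only [delZ, Function.comp_apply]
  split_ifs <;> rfl

section ChainMap

variable {B X : Type} {bq : Biquandle B} (bs : BSet bq X) (h : bs.StronglyConnected)

theorem lbTwistZ_act {n m : ℤ} (hm : m = n - 1) (x : X) (i : Fin n.toNat)
    (f : Fin n.toNat → B) :
    lbTwistZ (bs.tribr h) hm x i (bs.act x ∘ f) =
      bs.act (bs.act x (f i)) ∘ sbTwistZ bq hm i f := by
  funext j
  simp only [lbTwistZ, sbTwistZ, Function.comp_apply]
  split_ifs
  · rw [bs.tribr_act_act h, bs.compat]
  · rw [bs.tribr_act_act h]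

theorem muZ_of {n : ℤ} (x : X) (f : Fin n.toNat → B) (p : PLift (1 ≤ n)) :
    muZ bq bs n (.of ⟨x, f, p⟩) = .of (⟨x, bs.act x ∘ f, p⟩ : GLB X n) :=
  FreeAbelianGroup.lift_apply_of _ _

theorem dSB_of {n m : ℤ} (hm : m = n - 1) (x : X) (f : Fin n.toNat → B) (p : PLift (1 ≤ n)) :
    dSB bq bs n m hm (.of ⟨x, f, p⟩) =
      if h2 : 2 ≤ n then
        ∑ i : Fin n.toNat, ((-1 : ℤ) ^ ((i : ℕ) + 1)) •
          (.of (⟨x, delZ hm i f, ⟨by omega⟩⟩ : GSB B X m)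
            - .of (⟨bs.act x (f i), sbTwistZ bq hm i f, ⟨by omega⟩⟩ : GSB B X m))
      else 0 :=
  FreeAbelianGroup.lift_apply_of _ _

theorem dLB_of (tb : X → X → X → X) {n m : ℤ} (hm : m = n - 1) (x : X) (f : Fin n.toNat → X)
    (p : PLift (1 ≤ n)) :
    dLB tb n m hm (.of ⟨x, f, p⟩) =
      if h2 : 2 ≤ n then
        ∑ i : Fin n.toNat, ((-1 : ℤ) ^ ((i : ℕ) + 1)) •
          (.of (⟨x, delZ hm i f, ⟨by omega⟩⟩ : GLB X m)
            - .of (⟨f i, lbTwistZ tb hm x i f, ⟨by omega⟩⟩ : GLB X m))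
      else 0 :=
  FreeAbelianGroup.lift_apply_of _ _

theorem dLB_comp_muZ (n m : ℤ) (hm : m = n - 1) :
    (dLB (bs.tribr h) n m hm).comp (muZ bq bs n) = (muZ bq bs m).comp (dSB bq bs n m hm) := by
  refine FreeAbelianGroup.lift_ext _ _ fun ⟨x, f, p⟩ => ?_
  rw [AddMonoidHom.comp_apply, AddMonoidHom.comp_apply, muZ_of, dSB_of, dLB_of]
  split_ifs with h2
  · simp only [map_sum, map_zsmul, map_sub, muZ_of, delZ_comp, lbTwistZ_act bs h]
    rfl
  · rw [map_zero]

end ChainMap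

section Isomorphism

variable {B X : Type} {bq : Biquandle B} (bs : BSet bq X)

noncomputable def muGenEquiv (h : bs.StronglyConnected) (n : ℤ) : GSB B X n ≃ GLB X n where
  toFun g := ⟨g.1, bs.act g.1 ∘ g.2.1, g.2.2⟩
  invFun g := ⟨g.1, bs.sd h g.1 ∘ g.2.1, g.2.2⟩
  left_inv := fun ⟨x, f, p⟩ => by
    show (⟨x, bs.sd h x ∘ bs.act x ∘ f, p⟩ : GSB B X n) = ⟨x, f, p⟩
    simp only [Function.comp_def, bs.sd_act h]
  right_inv := fun ⟨x, f, p⟩ => by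
    show (⟨x, bs.act x ∘ bs.sd h x ∘ f, p⟩ : GLB X n) = ⟨x, f, p⟩
    simp only [Function.comp_def, bs.act_sd h]

theorem muZ_bijective (h : bs.StronglyConnected) (n : ℤ) : Function.Bijective (muZ bq bs n) :=
  (FreeAbelianGroup.equivOfEquiv (muGenEquiv bs h n)).bijective

noncomputable def muEquiv (h : bs.StronglyConnected) (n : ℤ) :
    FreeAbelianGroup (GSB B X n) ≃+ FreeAbelianGroup (GLB X n) :=
  AddEquiv.ofBijective (muZ bq bs n) (muZ_bijective bs h n)

theorem map_muZ_DegSB (h : bs.StronglyConnected) (n : ℤ) :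
    (DegSB B X n).map (muZ bq bs n).toIntLinearMap = DegLB X n := by
  rw [DegSB, DegLB, Submodule.map_span]
  congr 1
  ext c
  constructor
  · rintro ⟨_, ⟨⟨x, f, p⟩, rfl, i, j, hij, hf⟩, rfl⟩
    exact ⟨⟨x, bs.act x ∘ f, p⟩, muZ_of bs x f p, i, j, hij, congrArg (bs.act x) hf⟩
  · rintro ⟨⟨x, f, p⟩, rfl, i, j, hij, hf⟩
    refine ⟨.of ⟨x, bs.sd h x ∘ f, p⟩, ⟨_, rfl, i, j, hij, congrArg (bs.sd h x) hf⟩, ?_⟩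
    rw [AddMonoidHom.coe_toIntLinearMap, muZ_of]
    exact congrArg FreeAbelianGroup.of ((muGenEquiv bs h n).apply_symm_apply ⟨x, f, p⟩)

noncomputable def muAEquiv (h : bs.StronglyConnected) (A : Type) [AddCommGroup A] (n : ℤ) :
    CSBA B X A n ≃ₗ[ℤ] CLBA X A n :=
  TensorProduct.congr (muEquiv bs h n).toIntLinearEquiv (LinearEquiv.refl ℤ A)

theorem muAEquiv_toLinearMap (h : bs.StronglyConnected) (A : Type) [AddCommGroup A] (n : ℤ) :
    (muAEquiv bs h A n : CSBA B X A n →ₗ[ℤ] CLBA X A n) = muA bq bs A n :=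
  rfl

theorem dLBA_comp_muAEquiv (h : bs.StronglyConnected) (A : Type) [AddCommGroup A] (n m : ℤ)
    (hm : m = n - 1) :
    dLBA (bs.tribr h) A n m hm ∘ₗ (muAEquiv bs h A n : CSBA B X A n →ₗ[ℤ] CLBA X A n) =
      (muAEquiv bs h A m : CSBA B X A m →ₗ[ℤ] CLBA X A m) ∘ₗ dSBA bq bs A n m hm :=
  TensorProduct.ext' fun c a =>
    congrArg (· ⊗ₜ[ℤ] a) (DFunLike.congr_fun (dLB_comp_muZ bs h n m hm) c)

theorem map_muAEquiv_DegSBA (h : bs.StronglyConnected) (A : Type) [AddCommGroup A] (n : ℤ) :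
    (DegSBA B X A n).map (muAEquiv bs h A n : CSBA B X A n →ₗ[ℤ] CLBA X A n) =
      DegLBA X A n := by
  rw [muAEquiv_toLinearMap, DegSBA, DegLBA, ← map_muZ_DegSB bs h]
  exact TensorProduct.map_span_tmul _ _ A

theorem map_muAEquiv_cycSB (h : bs.StronglyConnected) (A : Type) [AddCommGroup A] (n : ℤ) :
    (cycSB bq bs A n).map (muAEquiv bs h A n : CSBA B X A n →ₗ[ℤ] CLBA X A n) =
      cycLB (bs.tribr h) A n := by
  rw [cycSB, cycLB, Submodule.map_comap_eq_of_comm (dLBA_comp_muAEquiv bs h A n (n - 1) rfl),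
    map_muAEquiv_DegSBA]

theorem map_muAEquiv_bdrSB (h : bs.StronglyConnected) (A : Type) [AddCommGroup A] (n : ℤ) :
    (bdrSB bq bs A n).map (muAEquiv bs h A n : CSBA B X A n →ₗ[ℤ] CLBA X A n) =
      bdrLB (bs.tribr h) A n := by
  rw [bdrSB, bdrLB, Submodule.map_sup, map_muAEquiv_DegSBA,
    LinearMap.map_range_eq_of_comm (dLBA_comp_muAEquiv bs h A (n + 1) n (by ring))]

noncomputable def homologyEquiv (h : bs.StronglyConnected) (A : Type) [AddCommGroup A] (n : ℤ) :
    HSB bq bs A n ≃ₗ[ℤ] HLB (bs.tribr h) A n :=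
  (muAEquiv bs h A n).subquotientCongr (map_muAEquiv_cycSB bs h A n)
    (map_muAEquiv_bdrSB bs h A n)

theorem homologyEquiv_mk (h : bs.StronglyConnected) (A : Type) [AddCommGroup A] (n : ℤ)
    {c : cycSB bq bs A n} {c' : cycLB (bs.tribr h) A n}
    (hc : (c' : CLBA X A n) = muA bq bs A n c) :
    homologyEquiv bs h A n (Submodule.Quotient.mk c) = Submodule.Quotient.mk c' :=
  LinearEquiv.subquotientCongr_mk _ (map_muAEquiv_cycSB bs h A n)
    (map_muAEquiv_bdrSB bs h A n) hc

end Isomorphism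

section Cohomology

variable {B X : Type} {bq : Biquandle B} (bs : BSet bq X) (h : bs.StronglyConnected)
  (A : Type) [AddCommGroup A]

noncomputable def muCochainEquiv (n : ℤ) :
    (FreeAbelianGroup (GSB B X n) →+ A) ≃+ (FreeAbelianGroup (GLB X n) →+ A) :=
  (muEquiv bs h n).addMonoidHomCongrLeft

theorem precompHom_dLB_comp_muCochainEquiv (n m : ℤ) (hm : m = n - 1) :
    (precompHom (dLB (bs.tribr h) n m hm)).comp (muCochainEquiv bs h A m).toAddMonoidHom =
      (muCochainEquiv bs h A n).toAddMonoidHom.comp (precompHom (dSB bq bs n m hm)) :=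
  precompHom_comp_addMonoidHomCongrLeft (dLB_comp_muZ bs h n m hm)

theorem map_muCochainEquiv_vanSB (n : ℤ) :
    (vanSB B X A n).map (muCochainEquiv bs h A n).toAddMonoidHom = vanLB X A n := by
  ext f
  rw [AddSubgroup.mem_map_equiv]
  change (∀ d ∈ DegSB B X n, f (muZ bq bs n d) = 0) ↔ ∀ d ∈ DegLB X n, f d = 0
  rw [← map_muZ_DegSB bs h]
  constructor
  · rintro hf _ ⟨d, hd, rfl⟩
    exact hf d hd
  · exact fun hf d hd => hf _ ⟨d, hd, rfl⟩

theorem map_muCochainEquiv_cocySB (n : ℤ) :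
    (cocySB bq bs A n).map (muCochainEquiv bs h A n).toAddMonoidHom =
      cocyLB (bs.tribr h) A n := by
  rw [cocySB, cocyLB, AddSubgroup.map_inf_eq _ _ _ (muCochainEquiv bs h A n).injective,
    map_muCochainEquiv_vanSB,
    AddSubgroup.map_ker_eq_of_comm
      (precompHom_dLB_comp_muCochainEquiv bs h A (n + 1) n (by ring))]

theorem map_muCochainEquiv_cobSB (n : ℤ) :
    (cobSB bq bs A n).map (muCochainEquiv bs h A n).toAddMonoidHom = cobLB (bs.tribr h) A n := by
  rw [cobSB, cobLB, AddSubgroup.map_map, ← precompHom_dLB_comp_muCochainEquiv,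
    ← AddSubgroup.map_map, map_muCochainEquiv_vanSB]

noncomputable def cohomologyEquiv (n : ℤ) : HcSB bq bs A n ≃+ HcLB (bs.tribr h) A n :=
  (muCochainEquiv bs h A n).subquotientCongr (map_muCochainEquiv_cocySB bs h A n)
    (map_muCochainEquiv_cobSB bs h A n)

theorem cohomologyEquiv_mk (n : ℤ) {f : cocySB bq bs A n} {f' : cocyLB (bs.tribr h) A n}
    (hf : (f : FreeAbelianGroup (GSB B X n) →+ A) = (f' : FreeAbelianGroup (GLB X n) →+ A).comp
      (muZ bq bs n)) :
    cohomologyEquiv bs h A n (QuotientAddGroup.mk f) = QuotientAddGroup.mk f' := by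
  refine AddEquiv.subquotientCongr_mk _ (map_muCochainEquiv_cocySB bs h A n)
    (map_muCochainEquiv_cobSB bs h A n) (AddMonoidHom.ext fun c => ?_)
  simp only [hf, muCochainEquiv, AddEquiv.addMonoidHomCongrLeft_apply, AddMonoidHom.comp_apply]
  exact congrArg (f' : FreeAbelianGroup (GLB X n) →+ A)
    ((muEquiv bs h n).apply_symm_apply c).symm

end Cohomology

/-- Theorem 4.4: for a shadow biquandle `(B,X)` with `X` strongly connected, with
corresponding horizontal-tribracket `[x,y,z] = y*((x↘z) ⊲' (x↘y))`, and any abelian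
group `A` and any integer `n`, the chain map `μ` induces isomorphisms
`H_n^SB(B,X;A) ≅ H_n^LB(X;A)` and `H^n_SB(B,X;A) ≅ H^n_LB(X;A)`. -/
theorem shadow_biquandle_local_biquandle_homology_iso {B X : Type}
    (bq : Biquandle B) (bs : BSet bq X) (h : bs.StronglyConnected)
    (A : Type) [AddCommGroup A] (n : ℤ) :
    (∃ e : HSB bq bs A n ≃+ HLB (bs.tribr h) A n,
      ∀ (c : cycSB bq bs A n) (c' : cycLB (bs.tribr h) A n),
        (c' : CLBA X A n) = muA bq bs A n (c : CSBA B X A n) →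
          e (Submodule.Quotient.mk c) = Submodule.Quotient.mk c') ∧
    (∃ e : HcSB bq bs A n ≃+ HcLB (bs.tribr h) A n,
      ∀ (f : cocySB bq bs A n) (f' : cocyLB (bs.tribr h) A n),
        (f : FreeAbelianGroup (GSB B X n) →+ A)
            = AddMonoidHom.comp (f' : FreeAbelianGroup (GLB X n) →+ A) (muZ bq bs n) →
          e (QuotientAddGroup.mk f) = QuotientAddGroup.mk f') := by
  exact ⟨⟨(homologyEquiv bs h A n).toAddEquiv, fun _ _ => homologyEquiv_mk bs h A n⟩,
    ⟨cohomologyEquiv bs h A n, fun _ _ => cohomologyEquiv_mk bs h A n⟩⟩
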